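/- arXiv:2401.06027 — 3 statements merged into one kernel-verified Lean document; each statement's English description precedes it below -/
import Mathlib

section
/- For any graph G, the saturation of the ideal L_G with respect to x_∅ equals the toric ideal I_G, i.e., L_G : x_∅^∞ = I_G. -/
open MvPolynomial

section KempePrelim

variable {V : Type} 

/-- A proper `k`-coloring. -/
def IsColoring (G : SimpleGraph V) (k : ℕ) (f : V → Fin k) : Prop :=
  ∀ ⦃u v : V⦄, G.Adj u v → f u ≠ f v

/-- `g` is obtained from `f` by a Kempe switching: swap colors `i` and `j` on
one connected component of the subgraph induced on `f⁻¹(i) ∪ f⁻¹(j)`. -/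
def KempeSwitch (G : SimpleGraph V) {k : ℕ} (f g : V → Fin k) : Prop :=
  ∃ i j : Fin k, ∃ C : Set V,
    (∃ comp : (G.induce {v | f v = i ∨ f v = j}).ConnectedComponent,
      C = Subtype.val '' comp.supp) ∧
    (∀ v ∈ C, (f v = i → g v = j) ∧ (f v = j → g v = i)) ∧
    (∀ v ∉ C, g v = f v)

/-- A single step of Kempe equivalence between proper `k`-colorings. -/
def KempeStep (G : SimpleGraph V) {k : ℕ} (f g : V → Fin k) : Prop :=
  IsColoring G k f ∧ IsColoring G k g ∧ KempeSwitch G f g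

/-- Kempe equivalence of `k`-colorings. -/
def KempeEquiv (G : SimpleGraph V) {k : ℕ} (f g : V → Fin k) : Prop :=
  Relation.ReflTransGen (KempeStep G) f g

/-- The type of proper `k`-colorings of `G`. -/
def ProperColoring (G : SimpleGraph V) (k : ℕ) : Type _ :=
  {f : V → Fin k // IsColoring G k f}

/-- The number of Kempe classes of `k`-colorings of `G`. -/
noncomputable def Kc (G : SimpleGraph V) (k : ℕ) : ℕ :=
  Nat.card (Quot (fun f g : ProperColoring G k => KempeEquiv G f.1 g.1))

/-- The stable (independent) sets of `G`, as a type indexing variables. -/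
def StableSet (G : SimpleGraph V) : Type _ :=
  {s : Finset V // ∀ ⦃i⦄, i ∈ s → ∀ ⦃j⦄, j ∈ s → ¬ G.Adj i j}

def emptyStable (G : SimpleGraph V) : StableSet G :=
  ⟨∅, by intro i hi; simp at hi⟩

def singleStable (G : SimpleGraph V) (i : V) : StableSet G :=
  ⟨{i}, by
    intro a ha b hb
    simp only [Finset.mem_singleton] at ha hb
    rw [ha, hb]
    exact G.irrefl⟩

def eraseStable (G : SimpleGraph V) [DecidableEq V] (S : StableSet G) (i : V) : StableSet G :=
  ⟨S.1.erase i, fun _ ha _ hb => S.2 (Finset.mem_of_mem_erase ha) (Finset.mem_of_mem_erase hb)⟩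

variable (K : Type) [Field K]

/-- The monoid algebra map `x_S ↦ t^{ρ(S)} s`, into `K[t₁,…,t_d,s]`
(realized as `MvPolynomial (Option V) K`, with `none` playing the role of `s`). -/
noncomputable def piMap (G : SimpleGraph V) :
    MvPolynomial (StableSet G) K →ₐ[K] MvPolynomial (Option V) K :=
  aeval fun S : StableSet G => (∏ i ∈ S.1, X (some i)) * X (none : Option V)

/-- The toric ideal `I_G` of the stable set ring. -/
noncomputable def toricIdeal (G : SimpleGraph V) : Ideal (MvPolynomial (StableSet G) K) :=
  RingHom.ker (piMap K G).toRingHom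

/-- The ideal `L_G`. -/
noncomputable def idealL (G : SimpleGraph V) [DecidableEq V] :
    Ideal (MvPolynomial (StableSet G) K) :=
  Ideal.span {p | ∃ (S : StableSet G) (i : V), i ∈ S.1 ∧ 2 ≤ S.1.card ∧
    p = X (eraseStable G S i) * X (singleStable G i) - X S * X (emptyStable G)}

/-- The 2-coloring ideal `J_G`. -/
noncomputable def idealJ (G : SimpleGraph V) [DecidableEq V] :
    Ideal (MvPolynomial (StableSet G) K) :=
  Ideal.span {p | ∃ S₁ S₂ S₃ S₄ : StableSet G,
    Disjoint S₁.1 S₂.1 ∧ Disjoint S₃.1 S₄.1 ∧ S₁.1 ∪ S₂.1 = S₃.1 ∪ S₄.1 ∧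
    p = X S₁ * X S₂ - X S₃ * X S₄}

/-- The ideal `⟨[I_G]₂⟩` generated by all quadratic binomials of `I_G`. -/
noncomputable def quadPart (G : SimpleGraph V) : Ideal (MvPolynomial (StableSet G) K) :=
  Ideal.span {p | (∃ S₁ S₂ S₃ S₄ : StableSet G, p = X S₁ * X S₂ - X S₃ * X S₄) ∧
    p ∈ toricIdeal K G}

/-- The monomial ideal `M_G`. -/
noncomputable def idealM (G : SimpleGraph V) [DecidableEq V] :
    Ideal (MvPolynomial (StableSet G) K) :=
  Ideal.span {p | ∃ S T : StableSet G, (S.1 ∩ T.1).Nonempty ∧ p = X S * X T}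

/-- The Kempe ideal `K_G = J_G + M_G`. -/
noncomputable def kempeIdeal (G : SimpleGraph V) [DecidableEq V] :
    Ideal (MvPolynomial (StableSet G) K) :=
  idealJ K G + idealM K G

/-- The color class of a proper coloring, as a stable set. -/
def colorClass (G : SimpleGraph V) [Fintype V] [DecidableEq V] {k : ℕ}
    (f : V → Fin k) (hf : IsColoring G k f) (c : Fin k) : StableSet G :=
  ⟨Finset.univ.filter (fun v => f v = c), by
    intro a ha b hb hadj
    simp only [Finset.mem_filter] at ha hb
    exact hf hadj (ha.2.trans hb.2.symm)⟩

/-- The monomial `x_f` associated with a proper `k`-coloring `f`. -/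
noncomputable def xMonomial (G : SimpleGraph V) [Fintype V] [DecidableEq V] {k : ℕ}
    (f : V → Fin k) (hf : IsColoring G k f) : MvPolynomial (StableSet G) K :=
  ∏ c : Fin k, X (colorClass G f hf c)

/-- The Hilbert function `k ↦ dim_K (R/I)_k` of a quotient of `R[G]`. -/
noncomputable def hilbertFn (G : SimpleGraph V)
    (I : Ideal (MvPolynomial (StableSet G) K)) (k : ℕ) : ℕ :=
  Module.finrank K (Submodule.map (Ideal.Quotient.mkₐ K I).toLinearMap
    (homogeneousSubmodule (StableSet G) K k))

end KempePrelim

/-! `L_G ⊆ I_G`, `I_G` is prime (`π` maps into a domain) and `x_∅ ∉ I_G`, so `L_G : x_∅^∞ ⊆ I_G`.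
Conversely, invert `x_∅` in `R[G] ⧸ L_G`. There the generators of `L_G` give
`x_S x_∅^|S| = x_∅ ∏_{i ∈ S} x_{i}`, so `tᵢ ↦ x_{i} / x_∅`, `s ↦ x_∅` defines a map `ψ` with `ψ ∘ π`
equal to the localization map. Hence every element of `ker π` vanishes once `x_∅` is inverted,
i.e. a power of `x_∅` multiplies it into `L_G`. -/

section StableSetRelations

variable {V : Type} [DecidableEq V] {G : SimpleGraph V}

theorem mul_pow_card_eq_mul_prod_singleStable {M : Type*} [CommMonoid M] (y : StableSet G → M)
    (hy : ∀ (S : StableSet G) (i : V), i ∈ S.1 → 2 ≤ S.1.card →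
      y (eraseStable G S i) * y (singleStable G i) = y S * y (emptyStable G))
    (S : StableSet G) :
    y S * y (emptyStable G) ^ S.1.card = y (emptyStable G) * ∏ i ∈ S.1, y (singleStable G i) := by
  obtain ⟨s, hs⟩ := S
  induction s using Finset.induction_on with
  | empty => simp [emptyStable]
  | insert a s ha ih =>
    rw [Finset.card_insert_of_notMem ha, Finset.prod_insert ha]
    rcases s.eq_empty_or_nonempty with rfl | hne
    · have : (⟨insert a ∅, hs⟩ : StableSet G) = singleStable G a := Subtype.ext rfl
      rw [this, Finset.prod_empty, Finset.card_empty, zero_add, mul_one, pow_one, mul_comm]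
    · have hsub : ∀ ⦃i⦄, i ∈ s → ∀ ⦃j⦄, j ∈ s → ¬ G.Adj i j := fun i hi j hj =>
        hs (Finset.mem_insert_of_mem hi) (Finset.mem_insert_of_mem hj)
      have hrel := hy ⟨insert a s, hs⟩ a (Finset.mem_insert_self a s)
        (by rw [Finset.card_insert_of_notMem ha]; have := hne.card_pos; omega)
      have herase : eraseStable G ⟨insert a s, hs⟩ a = ⟨s, hsub⟩ :=
        Subtype.ext (Finset.erase_insert ha)
      rw [herase] at hrel
      calc y ⟨insert a s, hs⟩ * y (emptyStable G) ^ (s.card + 1)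
          = y ⟨s, hsub⟩ * y (emptyStable G) ^ s.card * y (singleStable G a) := by
            rw [pow_succ', ← mul_assoc, ← hrel]; ac_rfl
        _ = _ := by rw [ih hsub]; ac_rfl

end StableSetRelations

section ToricIdeal

variable {V : Type} (G : SimpleGraph V) (K : Type) [Field K]

local notation "R" => MvPolynomial (StableSet G) K

theorem piMap_X (S : StableSet G) :
    piMap K G (X S) = (∏ i ∈ S.1, X (some i)) * X none :=
  aeval_X _ _

theorem mem_toricIdeal_iff (p : R) : p ∈ toricIdeal K G ↔ piMap K G p = 0 :=
  RingHom.mem_ker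

theorem X_emptyStable_notMem_toricIdeal : X (emptyStable G) ∉ toricIdeal K G := by
  rw [mem_toricIdeal_iff, piMap_X]
  simp [emptyStable]

variable [DecidableEq V]

theorem idealL_le_toricIdeal : idealL K G ≤ toricIdeal K G := by
  rw [idealL, Ideal.span_le]
  rintro _ ⟨S, i, hi, -, rfl⟩
  rw [SetLike.mem_coe, mem_toricIdeal_iff, map_sub, map_mul, map_mul, piMap_X, piMap_X, piMap_X,
    piMap_X, ← Finset.prod_erase_mul _ _ hi]
  simp only [eraseStable, singleStable, emptyStable, Finset.prod_singleton, Finset.prod_empty]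
  ring

theorem mem_toricIdeal_of_pow_mul_mem_idealL {p : R} {n : ℕ}
    (h : X (emptyStable G) ^ n * p ∈ idealL K G) : p ∈ toricIdeal K G :=
  have hprime : (toricIdeal K G).IsPrime := RingHom.ker_isPrime _
  (hprime.mem_or_mem (idealL_le_toricIdeal G K h)).resolve_left
    fun hX => X_emptyStable_notMem_toricIdeal G K (hprime.mem_of_pow_mem n hX)

abbrev LocalizedQuotientL : Type :=
  Localization.Away (Ideal.Quotient.mk (idealL K G) (X (emptyStable G)))

theorem algebraMap_eq_zero_of_mem_idealL {p : R} (hp : p ∈ idealL K G) :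
    algebraMap R (LocalizedQuotientL G K) p = 0 := by
  rw [IsScalarTower.algebraMap_apply R (R ⧸ idealL K G), Ideal.Quotient.algebraMap_eq,
    Ideal.Quotient.eq_zero_iff_mem.mpr hp, map_zero]

noncomputable def emptyStableInv : LocalizedQuotientL G K :=
  IsLocalization.Away.invSelf (Ideal.Quotient.mk (idealL K G) (X (emptyStable G)))

theorem algebraMap_X_emptyStable_mul_inv :
    algebraMap R (LocalizedQuotientL G K) (X (emptyStable G)) * emptyStableInv G K = 1 := by
  rw [IsScalarTower.algebraMap_apply R (R ⧸ idealL K G)]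
  exact IsLocalization.Away.mul_invSelf _

noncomputable def toricInverse : MvPolynomial (Option V) K →ₐ[K] LocalizedQuotientL G K :=
  aeval fun o => o.elim (algebraMap R (LocalizedQuotientL G K) (X (emptyStable G)))
    fun i => algebraMap R (LocalizedQuotientL G K) (X (singleStable G i)) * emptyStableInv G K

theorem toricInverse_comp_piMap :
    (toricInverse G K).comp (piMap K G) = IsScalarTower.toAlgHom K R (LocalizedQuotientL G K) := by
  refine algHom_ext fun S => ?_
  set y : StableSet G → LocalizedQuotientL G K := fun T => algebraMap R _ (X T)
  have hy : y S * y (emptyStable G) ^ S.1.card =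
      y (emptyStable G) * ∏ i ∈ S.1, y (singleStable G i) := by
    refine mul_pow_card_eq_mul_prod_singleStable y (fun T i hi hT => ?_) S
    rw [← sub_eq_zero]
    simp only [y, ← map_mul, ← map_sub]
    exact algebraMap_eq_zero_of_mem_idealL G K (Ideal.subset_span ⟨T, i, hi, hT, rfl⟩)
  calc toricInverse G K (piMap K G (X S))
      = y (emptyStable G) * (∏ i ∈ S.1, y (singleStable G i)) *
          emptyStableInv G K ^ S.1.card := by
        simp only [toricInverse, piMap_X, map_mul, map_prod, aeval_X, Option.elim_some,
          Option.elim_none, Finset.prod_mul_distrib, Finset.prod_const, y]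
        ring
    _ = y S * (y (emptyStable G) * emptyStableInv G K) ^ S.1.card := by rw [← hy]; ring
    _ = y S := by rw [algebraMap_X_emptyStable_mul_inv, one_pow, mul_one]

theorem exists_pow_mul_mem_idealL_of_mem_toricIdeal {p : R} (hp : p ∈ toricIdeal K G) :
    ∃ n : ℕ, X (emptyStable G) ^ n * p ∈ idealL K G := by
  have h : algebraMap R (LocalizedQuotientL G K) p = 0 := by
    rw [← IsScalarTower.toAlgHom_apply K, ← toricInverse_comp_piMap, AlgHom.comp_apply,
      (mem_toricIdeal_iff G K p).mp hp, map_zero]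
  rw [IsScalarTower.algebraMap_apply R (R ⧸ idealL K G), IsLocalization.map_eq_zero_iff
    (Submonoid.powers (Ideal.Quotient.mk (idealL K G) (X (emptyStable G))))] at h
  obtain ⟨⟨_, n, rfl⟩, h⟩ := h
  refine ⟨n, Ideal.Quotient.eq_zero_iff_mem.mp ?_⟩
  simpa only [map_mul, map_pow, Ideal.Quotient.algebraMap_eq] using h

end ToricIdeal

theorem saturation_idealL_eq_toricIdeal {d : ℕ} (G : SimpleGraph (Fin d))
    (K : Type) [Field K] :
    ∀ p : MvPolynomial (StableSet G) K,
      (∃ n : ℕ, 0 < n ∧ X (emptyStable G) ^ n * p ∈ idealL K G) ↔ p ∈ toricIdeal K G := by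
  refine fun p => ⟨fun ⟨n, _, h⟩ => mem_toricIdeal_of_pow_mul_mem_idealL G K h, fun hp => ?_⟩
  obtain ⟨n, hn⟩ := exists_pow_mul_mem_idealL_of_mem_toricIdeal G K hp
  refine ⟨n + 1, n.succ_pos, ?_⟩
  rw [pow_succ', mul_assoc]
  exact Ideal.mul_mem_left _ _ hn
end

section
/- The quadratic part ⟨[I_G]₂⟩ equals the 2-coloring ideal J_G if and only if the complement graph of G contains no triangle (3-cycle). -/
open MvPolynomial

/-!
The binomial `x_{S₁} x_{S₂} - x_{S₃} x_{S₄}` lies in `I_G` exactly when `S₁ + S₂ = S₃ + S₄` as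
multisets of vertices, and it lies in `J_G` when moreover `S₁ ∩ S₂ = ∅`. If `G` has no stable set
of size three, a binomial of `I_G` with `v ∈ S₁ ∩ S₂` has `v` in all four sets; removing it leaves
sets of size at most one, so `{S₁, S₂} = {S₃, S₄}` and the binomial is zero. Conversely, a stable
set `{a, b, c}` gives `x_{ab} x_{bc} - x_b x_{abc} ∈ I_G`, which is not in `J_G`: every element of
`J_G` lies in the monomial ideal spanned by the `x_T x_U` with `T ∩ U = ∅`, so its coefficient at
`x_b x_{abc}` vanishes.
-/

namespace Multiset

variable {α : Type*}

theorem eq_singleton_of_mem_of_card_le_one {a : α} {s : Multiset α}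
    (ha : a ∈ s) (hs : s.card ≤ 1) : s = {a} :=
  (Multiset.eq_of_le_of_card_le (Multiset.singleton_le.mpr ha) (by simpa using hs)).symm

theorem eq_zero_or_eq_singleton_of_card_le_one {s : Multiset α}
    (hs : s.card ≤ 1) : s = 0 ∨ ∃ a, s = {a} := by
  rcases s.empty_or_exists_mem with rfl | ⟨a, ha⟩
  exacts [Or.inl rfl, Or.inr ⟨a, eq_singleton_of_mem_of_card_le_one ha hs⟩]

theorem eq_and_eq_or_eq_and_eq_of_add_eq_add {A B C D : Multiset α}
    (hA : A.card ≤ 1) (hB : B.card ≤ 1) (hC : C.card ≤ 1) (hD : D.card ≤ 1) (h : A + B = C + D) :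
    (A = C ∧ B = D) ∨ (A = D ∧ B = C) := by
  rcases eq_zero_or_eq_singleton_of_card_le_one hA with rfl | ⟨a, rfl⟩
  · rw [zero_add] at h
    subst h
    rw [Multiset.card_add] at hB
    rcases eq_or_ne C 0 with rfl | hC0
    · exact Or.inl ⟨rfl, zero_add D⟩
    · have hD0 : D = 0 := Multiset.card_eq_zero.mp (by
        have := Multiset.card_pos.mpr hC0
        omega)
      exact Or.inr ⟨hD0.symm, by rw [hD0, add_zero]⟩
  · have ha : a ∈ C + D := h ▸ Multiset.mem_add.mpr (Or.inl (Multiset.mem_singleton_self a))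
    rcases Multiset.mem_add.mp ha with haC | haD
    · rw [eq_singleton_of_mem_of_card_le_one haC hC] at h ⊢
      exact Or.inl ⟨rfl, add_left_cancel h⟩
    · rw [eq_singleton_of_mem_of_card_le_one haD hD, add_comm C] at h
      rw [eq_singleton_of_mem_of_card_le_one haD hD]
      exact Or.inr ⟨rfl, add_left_cancel h⟩

end Multiset

namespace Finset

variable {α : Type*}

theorem val_add_val_eq_val_union [DecidableEq α] {s t : Finset α} (h : Disjoint s t) :
    s.val + t.val = (s ∪ t).val := by
  rw [← disjUnion_eq_union s t h, disjUnion_val]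

theorem eq_and_eq_or_eq_and_eq_of_val_add_eq_of_mem [DecidableEq α]
    {A B C D : Finset α} {v : α} (hA : A.card ≤ 2) (hB : B.card ≤ 2) (hC : C.card ≤ 2)
    (hD : D.card ≤ 2) (hvA : v ∈ A) (hvB : v ∈ B) (h : A.val + B.val = C.val + D.val) :
    (A = C ∧ B = D) ∨ (A = D ∧ B = C) := by
  have hvCD : v ∈ C ∧ v ∈ D := by
    have hcount := congrArg (Multiset.count v) h
    simp only [Multiset.count_add, Multiset.count_eq_of_nodup (nodup _), mem_val,
      hvA, hvB, if_true] at hcount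
    split_ifs at hcount with hvC hvD <;> first | exact ⟨hvC, hvD⟩ | omega
  have hcons : ∀ {X : Finset α}, v ∈ X → X.val = v ::ₘ (X.erase v).val := fun hX => by
    rw [erase_val, Multiset.cons_erase (mem_val.mpr hX)]
  have hcard : ∀ {X : Finset α}, v ∈ X → X.card ≤ 2 → (X.erase v).val.card ≤ 1 :=
    fun hvX hX => by
    rw [← card_def, card_erase_of_mem hvX]
    omega
  have herase : ∀ {X Y : Finset α}, v ∈ X → v ∈ Y → (X.erase v).val = (Y.erase v).val → X = Y :=
    fun hX hY hXY => val_inj.mp (by rw [hcons hX, hcons hY, hXY])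
  rw [hcons hvA, hcons hvB, hcons hvCD.1, hcons hvCD.2] at h
  simp only [Multiset.cons_add, Multiset.add_cons, Multiset.cons_inj_right] at h
  rcases Multiset.eq_and_eq_or_eq_and_eq_of_add_eq_add (hcard hvA hA) (hcard hvB hB)
    (hcard hvCD.1 hC) (hcard hvCD.2 hD) h with ⟨hAC, hBD⟩ | ⟨hAD, hBC⟩
  · exact Or.inl ⟨herase hvA hvCD.1 hAC, herase hvB hvCD.2 hBD⟩
  · exact Or.inr ⟨herase hvA hvCD.2 hAD, herase hvB hvCD.1 hBC⟩

end Finset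

theorem MvPolynomial.X_mul_X_eq_monomial {σ R : Type*} [CommSemiring R] (i j : σ) :
    (X i * X j : MvPolynomial σ R) = monomial (Finsupp.single i 1 + Finsupp.single j 1) 1 := by
  rw [X, X, monomial_mul, mul_one]

namespace StableSet

variable {V : Type} {G : SimpleGraph V}

def ofSubset (S : StableSet G) {t : Finset V} (ht : t ⊆ S.1) : StableSet G :=
  ⟨t, fun _ hi _ hj => S.2 (ht hi) (ht hj)⟩

noncomputable def exponent (S : StableSet G) : Option V →₀ ℕ :=
  Finsupp.single none 1 + ∑ i ∈ S.1, Finsupp.single (some i) 1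

theorem toMultiset_exponent (S : StableSet G) :
    Finsupp.toMultiset S.exponent = none ::ₘ S.1.val.map some := by
  simpa [exponent] using Finset.sum_multiset_singleton (S.1.map .some)

theorem cliqueFree_compl_iff_card_lt {n : ℕ} :
    Gᶜ.CliqueFree n ↔ ∀ S : StableSet G, S.1.card < n := by
  constructor
  · intro h S
    by_contra! hS
    obtain ⟨t, htS, ht⟩ := Finset.exists_subset_card_eq hS
    refine h t ⟨fun i hi j hj hij => ?_, ht⟩
    exact (SimpleGraph.compl_adj G i j).mpr ⟨hij, S.2 (htS hi) (htS hj)⟩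
  · intro h t ht
    refine (h ⟨t, fun i hi j hj hadj => ?_⟩).ne ht.card_eq
    exact ((SimpleGraph.compl_adj G i j).mp (ht.isClique hi hj (G.ne_of_adj hadj))).2 hadj

end StableSet

section StableSetRing

variable {V : Type} (K : Type) [Field K] {G : SimpleGraph V}

theorem piMap_X_s9 (S : StableSet G) : piMap K G (X S) = monomial S.exponent 1 := by
  rw [piMap, aeval_X, StableSet.exponent, add_comm, ← mul_one (1 : K), ← monomial_mul,
    monomial_sum_one]
  rfl

theorem binomial_mem_toricIdeal_iff (S₁ S₂ S₃ S₄ : StableSet G) :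
    X S₁ * X S₂ - X S₃ * X S₄ ∈ toricIdeal K G ↔
      S₁.1.val + S₂.1.val = S₃.1.val + S₄.1.val := by
  classical
  rw [toricIdeal, AlgHom.toRingHom_eq_coe, RingHom.mem_ker, AlgHom.coe_toRingHom, map_sub,
    sub_eq_zero, map_mul, map_mul, piMap_X_s9, piMap_X_s9, piMap_X_s9, piMap_X_s9, monomial_mul, monomial_mul,
    mul_one, (monomial_left_injective one_ne_zero).eq_iff,
    ← Finsupp.orderIsoMultiset.injective.eq_iff]
  simp only [Finsupp.coe_orderIsoMultiset, map_add, StableSet.toMultiset_exponent,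
    Multiset.cons_add, Multiset.add_cons, Multiset.cons_inj_right, ← Multiset.map_add]
  exact (Multiset.map_injective (Option.some_injective V)).eq_iff

theorem idealJ_le_quadPart [DecidableEq V] : idealJ K G ≤ quadPart K G := by
  refine Ideal.span_le.mpr ?_
  rintro _ ⟨S₁, S₂, S₃, S₄, h₁₂, h₃₄, hunion, rfl⟩
  refine Ideal.subset_span ⟨⟨S₁, S₂, S₃, S₄, rfl⟩, ?_⟩
  rw [binomial_mem_toricIdeal_iff, Finset.val_add_val_eq_val_union h₁₂,
    Finset.val_add_val_eq_val_union h₃₄, hunion]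

theorem quadPart_le_idealJ [DecidableEq V] (hG : ∀ S : StableSet G, S.1.card ≤ 2) :
    quadPart K G ≤ idealJ K G := by
  refine Ideal.span_le.mpr ?_
  rintro _ ⟨⟨S₁, S₂, S₃, S₄, rfl⟩, hker⟩
  rw [binomial_mem_toricIdeal_iff] at hker
  by_cases h₁₂ : Disjoint S₁.1 S₂.1
  · have h₃₄ : Disjoint S₃.1 S₄.1 := by
      have hnodup :=
        Multiset.nodup_add.mpr ⟨S₁.1.nodup, S₂.1.nodup, Finset.disjoint_val.mpr h₁₂⟩
      rw [hker] at hnodup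
      exact Finset.disjoint_val.mp (Multiset.nodup_add.mp hnodup).2.2
    have hunion : S₁.1 ∪ S₂.1 = S₃.1 ∪ S₄.1 := Finset.val_inj.mp <| by
      rw [← Finset.val_add_val_eq_val_union h₁₂, ← Finset.val_add_val_eq_val_union h₃₄, hker]
    exact Ideal.subset_span ⟨S₁, S₂, S₃, S₄, h₁₂, h₃₄, hunion, rfl⟩
  · obtain ⟨v, hv₁, hv₂⟩ := Finset.not_disjoint_iff.mp h₁₂
    have hzero : X S₁ * X S₂ - X S₃ * X S₄ = (0 : MvPolynomial (StableSet G) K) := by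
      rcases Finset.eq_and_eq_or_eq_and_eq_of_val_add_eq_of_mem (hG S₁) (hG S₂) (hG S₃) (hG S₄)
        hv₁ hv₂ hker with ⟨h₁₃, h₂₄⟩ | ⟨h₁₄, h₂₃⟩
      · rw [Subtype.ext h₁₃, Subtype.ext h₂₄, sub_self]
      · rw [Subtype.ext h₁₄, Subtype.ext h₂₃, mul_comm, sub_self]
    rw [hzero]
    exact zero_mem _

theorem idealJ_le_span_monomial_disjoint [DecidableEq V] :
    idealJ K G ≤ Ideal.span ((fun m => monomial m (1 : K)) ''
      {m | ∃ S T : StableSet G, Disjoint S.1 T.1 ∧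
        Finsupp.single S 1 + Finsupp.single T 1 = m}) := by
  refine Ideal.span_le.mpr ?_
  rintro _ ⟨S₁, S₂, S₃, S₄, h₁₂, h₃₄, -, rfl⟩
  rw [X_mul_X_eq_monomial, X_mul_X_eq_monomial]
  exact sub_mem (Ideal.subset_span ⟨_, ⟨S₁, S₂, h₁₂, rfl⟩, rfl⟩)
    (Ideal.subset_span ⟨_, ⟨S₃, S₄, h₃₄, rfl⟩, rfl⟩)

theorem coeff_eq_zero_of_mem_idealJ [DecidableEq V] {p : MvPolynomial (StableSet G) K}
    (hp : p ∈ idealJ K G) {S T : StableSet G} (hST : ¬Disjoint S.1 T.1) :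
    p.coeff (Finsupp.single S 1 + Finsupp.single T 1) = 0 := by
  by_contra hne
  obtain ⟨_, ⟨S', T', hdisj, rfl⟩, hle⟩ :=
    mem_ideal_span_monomial_image.mp (idealJ_le_span_monomial_disjoint K hp) _
      (mem_support_iff.mpr hne)
  have hmem : ∀ U, Finsupp.single U 1 ≤ Finsupp.single S' 1 + Finsupp.single T' 1 →
      U = S ∨ U = T := by
    intro U hU
    by_contra! hUST
    simpa [Finsupp.single_apply, hUST.1.symm, hUST.2.symm] using (hU.trans hle) U
  have hS' := hmem S' le_self_add
  have hT' := hmem T' le_add_self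
  rcases hS' with rfl | rfl <;> rcases hT' with rfl | rfl
  · exact hST (by rw [disjoint_self.mp hdisj]; exact disjoint_bot_left)
  · exact hST hdisj
  · exact hST hdisj.symm
  · exact hST (by rw [disjoint_self.mp hdisj]; exact disjoint_bot_right)

theorem quadPart_not_le_idealJ [DecidableEq V] (S : StableSet G) (hS : 2 < S.1.card) :
    ¬quadPart K G ≤ idealJ K G := by
  obtain ⟨a, ha, b, hb, c, hc, hab, hac, hbc⟩ := Finset.two_lt_card.mp hS
  let Sab := S.ofSubset (t := {a, b}) (by simp [Finset.insert_subset_iff, ha, hb])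
  let Sbc := S.ofSubset (t := {b, c}) (by simp [Finset.insert_subset_iff, hb, hc])
  let Sb := S.ofSubset (t := {b}) (by simp [hb])
  let Sabc := S.ofSubset (t := {a, b, c}) (by simp [Finset.insert_subset_iff, ha, hb, hc])
  have hmem : X Sab * X Sbc - X Sb * X Sabc ∈ quadPart K G := by
    refine Ideal.subset_span ⟨⟨_, _, _, _, rfl⟩, (binomial_mem_toricIdeal_iff K _ _ _ _).mpr ?_⟩
    simp [Sab, Sbc, Sb, Sabc, StableSet.ofSubset, hab, hac, hbc, Multiset.cons_swap]
  have hSab : Sab ≠ Sb := fun h => hab <| by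
    simpa [Sab, Sb, StableSet.ofSubset] using congrArg (fun T : StableSet G => a ∈ T.1) h
  have hSbc : Sbc ≠ Sb := fun h => hbc.symm <| by
    simpa [Sbc, Sb, StableSet.ofSubset] using congrArg (fun T : StableSet G => c ∈ T.1) h
  have hne : Finsupp.single Sab 1 + Finsupp.single Sbc 1 ≠
      Finsupp.single Sb 1 + Finsupp.single Sabc (1 : ℕ) := by
    simp [Finsupp.single_add_single_eq_single_add_single, hSab, hSbc]
  intro hle
  have hcoeff := coeff_eq_zero_of_mem_idealJ K (hle hmem) (S := Sb) (T := Sabc)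
    (Finset.not_disjoint_iff.mpr ⟨b, by simp [Sb, StableSet.ofSubset], by
      simp [Sabc, StableSet.ofSubset]⟩)
  classical
  simp [coeff_sub, X_mul_X_eq_monomial, coeff_monomial, hne] at hcoeff

end StableSetRing

theorem quadPart_eq_idealJ_iff {d : ℕ} (G : SimpleGraph (Fin d))
    (K : Type) [Field K] :
    quadPart K G = idealJ K G ↔ Gᶜ.CliqueFree 3 := by
  rw [StableSet.cliqueFree_compl_iff_card_lt]
  constructor
  · intro h S
    by_contra! hS
    exact quadPart_not_le_idealJ K S hS h.le
  · intro hG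
    exact le_antisymm (quadPart_le_idealJ K fun S => Nat.lt_succ_iff.mp (hG S))
      (idealJ_le_quadPart K)
end

section
/- For k-colorings f and g of a graph G (or of an induced subgraph of G), f ∼ₖ g if and only if x_f − x_g belongs to the Kempe ideal K_G = J_G + M_G. -/
open MvPolynomial

/-!
A Kempe switch on colors `i, j` only replaces the color classes `f⁻¹(i), f⁻¹(j)` by two disjoint
stable sets with the same union, so `x_f - x_g` is a multiple of a generator of `J_G`.

Conversely, let `A` be the set of exponent vectors of colorings Kempe equivalent to `f`, and `ℓ`
the linear functional summing the coefficients of the monomials with exponent in `A`. Recoloring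
the union of two color classes by another pair of disjoint stable sets is a sequence of Kempe
switches, and no coloring monomial is divisible by `x_S x_T` with `S ∩ T ≠ ∅`; hence `ℓ` kills
every monomial multiple of a generator of `K_G`, so it vanishes on `K_G`. Then `ℓ(x_f - x_g) = 0`
puts the exponent of `g` in `A`, and colorings with equal exponents differ by a permutation of the
colors: a product of transpositions, each realised by Kempe switches.
-/

open Finset

namespace Equiv

lemma eq_swap_apply_of_ne {α : Type*} [DecidableEq α] {a b c₁ c₂ : α}
    (ha : a = c₁ ∨ a = c₂) (hb : b = c₁ ∨ b = c₂) (hab : a ≠ b) : b = swap c₁ c₂ a := by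
  rcases ha with rfl | rfl <;> rcases hb with rfl | rfl <;> simp_all

end Equiv

namespace SimpleGraph.ConnectedComponent

lemma mem_image_val_supp_of_adj {V : Type} {G : SimpleGraph V} {s : Set V}
    {comp : (G.induce s).ConnectedComponent} {u v : V}
    (hu : u ∈ Subtype.val '' comp.supp) (hv : v ∈ s) (hadj : G.Adj u v) :
    v ∈ Subtype.val '' comp.supp := by
  obtain ⟨x, hx, rfl⟩ := hu
  refine ⟨⟨v, hv⟩, ?_, rfl⟩
  rw [mem_supp_iff] at hx ⊢
  exact hx ▸ (connectedComponentMk_eq_of_adj (v := x) hadj).symm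

end SimpleGraph.ConnectedComponent

section Kempe

variable {V : Type} {G : SimpleGraph V} {k : ℕ}

lemma IsColoring.perm_comp {f : V → Fin k} (hf : IsColoring G k f) (σ : Equiv.Perm (Fin k)) :
    IsColoring G k (σ ∘ f) :=
  fun _ _ hadj => σ.injective.ne (hf hadj)

lemma eq_iff_of_eq_or_eq_swap {f g : V → Fin k} {c₁ c₂ c : Fin k}
    (h : ∀ v, g v = f v ∨ g v = Equiv.swap c₁ c₂ (f v)) (hc₁ : c ≠ c₁) (hc₂ : c ≠ c₂) (v : V) :
    g v = c ↔ f v = c := by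
  rcases h v with h | h <;> rw [h]
  rw [Equiv.swap_apply_eq_iff, Equiv.swap_apply_of_ne_of_ne hc₁ hc₂]

open scoped Classical in
lemma kempeStep_piecewise {f : V → Fin k} (hf : IsColoring G k f) {i j : Fin k}
    (comp : (G.induce {v | f v = i ∨ f v = j}).ConnectedComponent) :
    KempeStep G f ((Subtype.val '' comp.supp).piecewise (Equiv.swap i j ∘ f) f) := by
  set C := Subtype.val '' comp.supp
  have hC : ∀ v ∈ C, f v = i ∨ f v = j := by
    rintro _ ⟨x, -, rfl⟩
    exact x.2
  have hboundary : ∀ u v, G.Adj u v → u ∈ C → v ∉ C → Equiv.swap i j (f u) ≠ f v := by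
    intro u v hadj hu hv heq
    refine hv (SimpleGraph.ConnectedComponent.mem_image_val_supp_of_adj hu ?_ hadj)
    rcases hC u hu with h | h <;> simp [← heq, h]
  refine ⟨hf, ?_, i, j, C, ⟨comp, rfl⟩, ?_, fun v hv => Set.piecewise_eq_of_notMem _ _ _ hv⟩
  · intro u v hadj
    by_cases hu : u ∈ C <;> by_cases hv : v ∈ C <;>
      simp only [Set.piecewise_eq_of_mem, Set.piecewise_eq_of_notMem, hu, hv,
        not_false_eq_true, Function.comp_apply]
    · exact (Equiv.swap i j).injective.ne (hf hadj)
    · exact hboundary u v hadj hu hv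
    · exact (hboundary v u hadj.symm hv hu).symm
    · exact hf hadj
  · intro v hv
    simp only [Set.piecewise_eq_of_mem _ _ _ hv, Function.comp_apply]
    exact ⟨fun h => by rw [h, Equiv.swap_apply_left], fun h => by rw [h, Equiv.swap_apply_right]⟩

lemma eq_swap_on_kempeChain {f g : V → Fin k} {c₁ c₂ : Fin k}
    (hf : IsColoring G k f) (hg : IsColoring G k g)
    (h : ∀ v, g v = f v ∨ g v = Equiv.swap c₁ c₂ (f v)) {v₀ : V}
    (hv₀ : f v₀ = c₁ ∨ f v₀ = c₂) (hne : g v₀ ≠ f v₀) :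
    ∀ v ∈ Subtype.val '' ((G.induce {v | f v = c₁ ∨ f v = c₂}).connectedComponentMk
      ⟨v₀, hv₀⟩).supp, g v = Equiv.swap c₁ c₂ (f v) := by
  -- Along an edge of the chain, `g = f` at one end would force `g` to repeat a color.
  have hstep : ∀ x y : {v | f v = c₁ ∨ f v = c₂}, G.Adj x y →
      g x = Equiv.swap c₁ c₂ (f x) → g y = Equiv.swap c₁ c₂ (f y) := by
    intro x y hadj hx
    refine (h y).resolve_left fun hy => hg hadj ?_
    rw [hx, hy]
    exact (Equiv.eq_swap_apply_of_ne x.2 y.2 (hf hadj)).symm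
  have hwalk : ∀ x y (w : (G.induce {v | f v = c₁ ∨ f v = c₂}).Walk x y),
      g x = Equiv.swap c₁ c₂ (f x) → g y = Equiv.swap c₁ c₂ (f y) := by
    intro x y w
    induction w with
    | nil => exact id
    | cons hadj _ ih => exact fun hx => ih (hstep _ _ hadj hx)
  rintro _ ⟨y, hy, rfl⟩
  rw [SimpleGraph.ConnectedComponent.mem_supp_iff,
    SimpleGraph.ConnectedComponent.eq] at hy
  obtain ⟨w⟩ := hy.symm
  exact hwalk _ _ w ((h v₀).resolve_left hne)

lemma kempeEquiv_of_eq_or_eq_swap [Fintype V] {f g : V → Fin k} {c₁ c₂ : Fin k}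
    (hf : IsColoring G k f) (hg : IsColoring G k g)
    (h : ∀ v, g v = f v ∨ g v = Equiv.swap c₁ c₂ (f v)) : KempeEquiv G f g := by
  classical
  induction hn : #{v | f v ≠ g v} using Nat.strong_induction_on generalizing f with
  | _ n ih =>
  by_cases hfg : f = g
  · subst hfg
    exact Relation.ReflTransGen.refl
  obtain ⟨v₀, hv₀⟩ := Function.ne_iff.1 hfg
  have hv₀g : g v₀ = Equiv.swap c₁ c₂ (f v₀) := (h v₀).resolve_left (Ne.symm hv₀)
  have hv₀c : f v₀ = c₁ ∨ f v₀ = c₂ := by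
    by_contra! hc
    exact hv₀ (by rw [hv₀g, Equiv.swap_apply_of_ne_of_ne hc.1 hc.2])
  -- Switching `f` on the Kempe chain of `v₀` makes it agree with `g` on that chain.
  set comp := (G.induce {v | f v = c₁ ∨ f v = c₂}).connectedComponentMk ⟨v₀, hv₀c⟩
  set C := Subtype.val '' comp.supp
  have hgC := eq_swap_on_kempeChain hf hg h hv₀c (Ne.symm hv₀)
  have hstep := kempeStep_piecewise hf comp
  set f' := C.piecewise (Equiv.swap c₁ c₂ ∘ f) f with hf'
  have hf'C : ∀ v ∈ C, f' v = g v := fun v hv => by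
    rw [hf', Set.piecewise_eq_of_mem _ _ _ hv, hgC v hv, Function.comp_apply]
  have hf'nC : ∀ v ∉ C, f' v = f v := fun v hv => by
    rw [hf', Set.piecewise_eq_of_notMem _ _ _ hv]
  have hv₀C : v₀ ∈ C := ⟨⟨v₀, hv₀c⟩, rfl, rfl⟩
  refine Relation.ReflTransGen.head hstep (ih _ ?_ hstep.2.1 (fun v => ?_) rfl)
  · rw [← hn]
    refine Finset.card_lt_card (Finset.ssubset_iff_of_subset ?_ |>.2 ⟨v₀, ?_, ?_⟩)
    · intro v
      simp only [Finset.mem_filter, Finset.mem_univ, true_and]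
      by_cases hv : v ∈ C
      · exact fun hne => absurd (hf'C v hv) hne
      · rw [hf'nC v hv]; exact id
    · simpa using hv₀
    · simpa using hf'C v₀ hv₀C
  · by_cases hv : v ∈ C
    · exact Or.inl (hf'C v hv).symm
    · rw [hf'nC v hv]; exact h v

lemma kempeEquiv_perm_comp [Fintype V] {f : V → Fin k} (hf : IsColoring G k f)
    (σ : Equiv.Perm (Fin k)) : KempeEquiv G f (σ ∘ f) := by
  induction σ using Equiv.Perm.swap_induction_on with
  | one => exact Relation.ReflTransGen.refl
  | swap_mul τ x y _ ih =>
    exact Relation.ReflTransGen.trans ih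
      (kempeEquiv_of_eq_or_eq_swap (hf.perm_comp τ) (hf.perm_comp _) fun _ => Or.inr rfl)

lemma KempeSwitch.exists_eq_or_eq_swap {f g : V → Fin k} (h : KempeSwitch G f g) :
    ∃ c₁ c₂, ∀ v, g v = f v ∨ g v = Equiv.swap c₁ c₂ (f v) := by
  obtain ⟨i, j, C, ⟨comp, rfl⟩, hC, hout⟩ := h
  refine ⟨i, j, fun v => or_iff_not_imp_right.2 fun hv => ?_⟩
  refine hout v fun hvC => hv ?_
  rcases hvC with ⟨x, hx, rfl⟩
  rcases x.2 with hi | hj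
  · rw [(hC _ ⟨x, hx, rfl⟩).1 hi, hi, Equiv.swap_apply_left]
  · rw [(hC _ ⟨x, hx, rfl⟩).2 hj, hj, Equiv.swap_apply_right]

lemma IsColoring.of_eq_or_eq_swap {f g : V → Fin k} (hf : IsColoring G k f) {c₁ c₂ : Fin k}
    (h : ∀ v, g v = f v ∨ g v = Equiv.swap c₁ c₂ (f v))
    (h₁ : ∀ u v, g u = c₁ → g v = c₁ → ¬G.Adj u v)
    (h₂ : ∀ u v, g u = c₂ → g v = c₂ → ¬G.Adj u v) : IsColoring G k g := by
  intro u v hadj huv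
  by_cases hc₁ : g v = c₁
  · exact h₁ u v (huv.trans hc₁) hc₁ hadj
  by_cases hc₂ : g v = c₂
  · exact h₂ u v (huv.trans hc₂) hc₂ hadj
  exact hf hadj (((eq_iff_of_eq_or_eq_swap h hc₁ hc₂ u).1 huv).trans
    ((eq_iff_of_eq_or_eq_swap h hc₁ hc₂ v).1 rfl).symm)

lemma exists_eq_or_eq_swap_of_union [DecidableEq V] {f : V → Fin k} {c₁ c₂ : Fin k}
    (hc : c₁ ≠ c₂) {A B : Finset V} (hAB : Disjoint A B)
    (hu : ∀ v, v ∈ A ∨ v ∈ B ↔ f v = c₁ ∨ f v = c₂) :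
    ∃ g : V → Fin k, (∀ v, g v = f v ∨ g v = Equiv.swap c₁ c₂ (f v)) ∧
      (∀ v, g v = c₁ ↔ v ∈ A) ∧ ∀ v, g v = c₂ ↔ v ∈ B := by
  let g v := if v ∈ A then c₁ else if v ∈ B then c₂ else f v
  have hAB' (v : V) : v ∈ A → v ∉ B := fun h => Finset.disjoint_left.1 hAB h
  have hgA (v : V) : g v = c₁ ↔ v ∈ A := by
    have := hu v
    have := hAB' v
    simp only [g]; split_ifs <;> simp_all [Ne.symm hc]
  have hgB (v : V) : g v = c₂ ↔ v ∈ B := by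
    have := hu v
    have := hAB' v
    simp only [g]; split_ifs <;> simp_all
  refine ⟨g, fun v => ?_, hgA, hgB⟩
  by_cases hv : v ∈ A ∨ v ∈ B
  · refine or_iff_not_imp_left.2 fun hne =>
      Equiv.eq_swap_apply_of_ne ((hu v).1 hv) ?_ (Ne.symm hne)
    rcases hv with hv | hv
    · exact Or.inl ((hgA v).2 hv)
    · exact Or.inr ((hgB v).2 hv)
  · simp only [g, if_neg (not_or.1 hv).1, if_neg (not_or.1 hv).2, true_or]

end Kempe

@[to_additive]
lemma Finset.prod_eq_mul_mul_prod_sdiff_pair {ι M : Type*} [Fintype ι] [DecidableEq ι]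
    [CommMonoid M] {i j : ι} (hij : i ≠ j) (a : ι → M) :
    ∏ c, a c = a i * a j * ∏ c ∈ univ \ {i, j}, a c := by
  rw [← Finset.prod_pair hij, mul_comm, Finset.prod_sdiff (subset_univ _)]

section Exponents

variable {V : Type} [Fintype V] [DecidableEq V] {G : SimpleGraph V} {k : ℕ}

instance : DecidableEq (StableSet G) :=
  inferInstanceAs (DecidableEq (Subtype _))

lemma mem_colorClass {f : V → Fin k} {hf : IsColoring G k f} {c : Fin k} {v : V} :
    v ∈ (colorClass G f hf c).1 ↔ f v = c := by
  simp [colorClass]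

lemma colorClass_disjoint {f : V → Fin k} (hf : IsColoring G k f) {c₁ c₂ : Fin k}
    (hc : c₁ ≠ c₂) : Disjoint (colorClass G f hf c₁).1 (colorClass G f hf c₂).1 :=
  Finset.disjoint_left.2 fun _ h₁ h₂ => hc ((mem_colorClass.1 h₁).symm.trans (mem_colorClass.1 h₂))

lemma colorClass_eq_of_eq_or_eq_swap {f g : V → Fin k} (hf : IsColoring G k f)
    (hg : IsColoring G k g) {c₁ c₂ c : Fin k}
    (h : ∀ v, g v = f v ∨ g v = Equiv.swap c₁ c₂ (f v)) (hc₁ : c ≠ c₁) (hc₂ : c ≠ c₂) :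
    colorClass G g hg c = colorClass G f hf c :=
  Subtype.ext <| Finset.ext fun v => by
    rw [mem_colorClass, mem_colorClass, eq_iff_of_eq_or_eq_swap h hc₁ hc₂]

lemma colorClass_union_eq_of_eq_or_eq_swap {f g : V → Fin k} (hf : IsColoring G k f)
    (hg : IsColoring G k g) {c₁ c₂ : Fin k}
    (h : ∀ v, g v = f v ∨ g v = Equiv.swap c₁ c₂ (f v)) :
    (colorClass G g hg c₁).1 ∪ (colorClass G g hg c₂).1 =
      (colorClass G f hf c₁).1 ∪ (colorClass G f hf c₂).1 := by
  ext v
  simp only [Finset.mem_union, mem_colorClass]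
  rcases h v with h | h <;> rw [h]
  rw [Equiv.swap_apply_eq_iff, Equiv.swap_apply_eq_iff, Equiv.swap_apply_left,
    Equiv.swap_apply_right, or_comm]

noncomputable def colorExp (f : V → Fin k) (hf : IsColoring G k f) : StableSet G →₀ ℕ :=
  ∑ c, Finsupp.single (colorClass G f hf c) 1

lemma xMonomial_eq_monomial (K : Type) [Field K] {f : V → Fin k} (hf : IsColoring G k f) :
    xMonomial K G f hf = monomial (colorExp f hf) 1 := by
  rw [xMonomial, colorExp, monomial_sum_one]
  rfl

lemma colorExp_apply {f : V → Fin k} (hf : IsColoring G k f) (S : StableSet G) :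
    colorExp f hf S = #{c | colorClass G f hf c = S} := by
  simp only [colorExp, Finsupp.finsetSum_apply, Finsupp.single_apply, Finset.card_filter]

lemma exists_ne_of_colorExp_eq_add {f : V → Fin k} {hf : IsColoring G k f}
    {m : StableSet G →₀ ℕ} {S T : StableSet G}
    (he : colorExp f hf = m + Finsupp.single S 1 + Finsupp.single T 1) :
    ∃ c₁ c₂, c₁ ≠ c₂ ∧ colorClass G f hf c₁ = S ∧ colorClass G f hf c₂ = T := by
  have hcard := fun U => (colorExp_apply hf U).symm.trans (congrArg (· U) he)
  by_cases hST : S = T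
  · subst hST
    obtain ⟨c₁, h₁, c₂, h₂, hc⟩ := Finset.one_lt_card.1
      (by rw [hcard]; simp : 1 < #{c | colorClass G f hf c = S})
    exact ⟨c₁, c₂, hc, (Finset.mem_filter.1 h₁).2, (Finset.mem_filter.1 h₂).2⟩
  · obtain ⟨c₁, h₁⟩ := Finset.card_pos.1
      (by rw [hcard]; simp [hST] : 0 < #{c | colorClass G f hf c = S})
    obtain ⟨c₂, h₂⟩ := Finset.card_pos.1
      (by rw [hcard]; simp : 0 < #{c | colorClass G f hf c = T})
    rw [Finset.mem_filter] at h₁ h₂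
    exact ⟨c₁, c₂, fun hc => hST (by rw [← h₁.2, ← h₂.2, hc]), h₁.2, h₂.2⟩

lemma colorExp_add_eq_of_eq_or_eq_swap {f g : V → Fin k} (hf : IsColoring G k f)
    (hg : IsColoring G k g) {c₁ c₂ : Fin k} (hc : c₁ ≠ c₂)
    (h : ∀ v, g v = f v ∨ g v = Equiv.swap c₁ c₂ (f v)) :
    colorExp g hg + Finsupp.single (colorClass G f hf c₁) 1 +
        Finsupp.single (colorClass G f hf c₂) 1 =
      colorExp f hf + Finsupp.single (colorClass G g hg c₁) 1 +
        Finsupp.single (colorClass G g hg c₂) 1 := by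
  have hrest : ∀ c ∈ univ \ {c₁, c₂},
      Finsupp.single (colorClass G g hg c) 1 = Finsupp.single (colorClass G f hf c) 1 := by
    intro c hc'
    simp only [Finset.mem_sdiff, Finset.mem_insert, Finset.mem_singleton, not_or] at hc'
    rw [colorClass_eq_of_eq_or_eq_swap hf hg h hc'.2.1 hc'.2.2]
  rw [colorExp, colorExp, Finset.sum_eq_add_add_sum_sdiff_pair hc,
    Finset.sum_eq_add_add_sum_sdiff_pair hc, Finset.sum_congr rfl hrest]
  abel

end Exponents

section KempeClasses

variable {V : Type} [Fintype V] [DecidableEq V] {G : SimpleGraph V} {k : ℕ}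

lemma exists_perm_comp_eq_of_colorExp_eq {f g : V → Fin k} {hf : IsColoring G k f}
    {hg : IsColoring G k g} (he : colorExp f hf = colorExp g hg) :
    ∃ σ : Equiv.Perm (Fin k), g = σ ∘ f := by
  have hcard (S : StableSet G) :
      Fintype.card {c // colorClass G f hf c = S} =
        Fintype.card {c // colorClass G g hg c = S} := by
    rw [Fintype.card_subtype, Fintype.card_subtype, ← colorExp_apply, ← colorExp_apply, he]
  let σ := Equiv.ofFiberEquiv fun S => Fintype.equivOfCardEq (hcard S)
  refine ⟨σ, funext fun v => ?_⟩
  have hσ (c : Fin k) : colorClass G g hg (σ c) = colorClass G f hf c := Equiv.ofFiberEquiv_map _ c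
  have hv : v ∈ (colorClass G g hg (σ (f v))).1 := by
    rw [hσ, mem_colorClass]
  exact mem_colorClass.1 hv

lemma kempeEquiv_of_colorExp_eq {f g : V → Fin k} {hf : IsColoring G k f}
    {hg : IsColoring G k g} (he : colorExp f hf = colorExp g hg) : KempeEquiv G f g := by
  obtain ⟨σ, rfl⟩ := exists_perm_comp_eq_of_colorExp_eq he
  exact kempeEquiv_perm_comp hf σ

lemma exists_kempeEquiv_colorExp_eq {f : V → Fin k} (hf : IsColoring G k f)
    {m : StableSet G →₀ ℕ} {S₁ S₂ S₃ S₄ : StableSet G}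
    (he : colorExp f hf = m + Finsupp.single S₁ 1 + Finsupp.single S₂ 1)
    (h₃₄ : Disjoint S₃.1 S₄.1) (hu : S₁.1 ∪ S₂.1 = S₃.1 ∪ S₄.1) :
    ∃ g, ∃ hg : IsColoring G k g,
      KempeEquiv G f g ∧ colorExp g hg = m + Finsupp.single S₃ 1 + Finsupp.single S₄ 1 := by
  obtain ⟨c₁, c₂, hc, rfl, rfl⟩ := exists_ne_of_colorExp_eq_add he
  obtain ⟨g, hswap, hg₃, hg₄⟩ := exists_eq_or_eq_swap_of_union hc h₃₄ fun v => by
    rw [← Finset.mem_union, ← hu, Finset.mem_union, mem_colorClass, mem_colorClass]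
  have hg : IsColoring G k g := hf.of_eq_or_eq_swap hswap
    (fun u v hu hv => S₃.2 ((hg₃ u).1 hu) ((hg₃ v).1 hv))
    (fun u v hu hv => S₄.2 ((hg₄ u).1 hu) ((hg₄ v).1 hv))
  have hS₃ : colorClass G g hg c₁ = S₃ :=
    Subtype.ext <| Finset.ext fun v => by rw [mem_colorClass, hg₃]
  have hS₄ : colorClass G g hg c₂ = S₄ :=
    Subtype.ext <| Finset.ext fun v => by rw [mem_colorClass, hg₄]
  refine ⟨g, hg, kempeEquiv_of_eq_or_eq_swap hf hg hswap, ?_⟩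
  have := colorExp_add_eq_of_eq_or_eq_swap hf hg hc hswap
  rw [he, hS₃, hS₄, add_assoc (colorExp g hg)] at this
  apply add_right_cancel (b := Finsupp.single (colorClass G f hf c₁) 1 +
    Finsupp.single (colorClass G f hf c₂) 1)
  rw [this]
  abel

variable (G) in
def kempeClassExps (f : V → Fin k) : Set (StableSet G →₀ ℕ) :=
  {e | ∃ g, ∃ hg : IsColoring G k g, KempeEquiv G f g ∧ colorExp g hg = e}

lemma add_single_mem_kempeClassExps_of_union_eq {f : V → Fin k} {m : StableSet G →₀ ℕ}
    {S₁ S₂ S₃ S₄ : StableSet G} (h₃₄ : Disjoint S₃.1 S₄.1) (hu : S₁.1 ∪ S₂.1 = S₃.1 ∪ S₄.1)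
    (h : m + Finsupp.single S₁ 1 + Finsupp.single S₂ 1 ∈ kempeClassExps G f) :
    m + Finsupp.single S₃ 1 + Finsupp.single S₄ 1 ∈ kempeClassExps G f := by
  obtain ⟨g, hg, hfg, he⟩ := h
  obtain ⟨g', hg', hgg', he'⟩ := exists_kempeEquiv_colorExp_eq hg he h₃₄ hu
  exact ⟨g', hg', Relation.ReflTransGen.trans hfg hgg', he'⟩

end KempeClasses

namespace MvPolynomial

variable {σ R : Type*} [CommSemiring R]

noncomputable def coeffSum (A : Set (σ →₀ ℕ)) : MvPolynomial σ R →ₗ[R] R :=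
  (basisMonomials σ R).constr R (A.indicator 1)

lemma coeffSum_monomial (A : Set (σ →₀ ℕ)) (m : σ →₀ ℕ) (c : R) :
    coeffSum A (monomial m c) = c * A.indicator 1 m := by
  have hm : monomial m c = c • basisMonomials σ R m := by
    rw [coe_basisMonomials, smul_monomial, smul_eq_mul, mul_one]
  rw [hm, map_smul, coeffSum, Module.Basis.constr_basis, smul_eq_mul]

lemma coeffSum_eq_zero_of_mem_span {A : Set (σ →₀ ℕ)} {s : Set (MvPolynomial σ R)}
    (hs : ∀ p ∈ s, ∀ m, coeffSum A (monomial m 1 * p) = 0) {p : MvPolynomial σ R}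
    (hp : p ∈ Ideal.span s) : coeffSum A p = 0 := by
  suffices ∀ q, coeffSum A (q * p) = 0 by simpa using this 1
  induction hp using Submodule.span_induction with
  | mem p hp =>
    intro q
    rw [q.as_sum, Finset.sum_mul, map_sum]
    refine Finset.sum_eq_zero fun m _ => ?_
    rw [← mul_one (coeff m q), ← C_mul_monomial, mul_assoc, C_mul', map_smul, hs p hp m,
      smul_zero]
  | zero => simp
  | add p p' _ _ hp hp' => simp [mul_add, hp, hp']
  | smul a p _ hp => exact fun q => by rw [smul_eq_mul, ← mul_assoc, hp]

lemma monomial_mul_X_mul_X (m : σ →₀ ℕ) (i j : σ) :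
    monomial m (1 : R) * (X i * X j) =
      monomial (m + Finsupp.single i 1 + Finsupp.single j 1) 1 := by
  simp only [X, monomial_mul, mul_one, add_assoc]

end MvPolynomial

section KempeIdeal

variable {V : Type} [Fintype V] [DecidableEq V] {G : SimpleGraph V} {k : ℕ}
  (K : Type) [Field K]

lemma sub_mem_idealJ_of_eq_or_eq_swap {f g : V → Fin k} (hf : IsColoring G k f)
    (hg : IsColoring G k g) {c₁ c₂ : Fin k}
    (h : ∀ v, g v = f v ∨ g v = Equiv.swap c₁ c₂ (f v)) :
    xMonomial K G f hf - xMonomial K G g hg ∈ idealJ K G := by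
  rcases eq_or_ne c₁ c₂ with rfl | hc
  · obtain rfl : g = f := funext fun v => by simpa using h v
    rw [sub_self]
    exact zero_mem _
  have hrest : ∀ c ∈ univ \ {c₁, c₂},
      (X (colorClass G g hg c) : MvPolynomial (StableSet G) K) = X (colorClass G f hf c) := by
    intro c hc'
    simp only [Finset.mem_sdiff, Finset.mem_insert, Finset.mem_singleton, not_or] at hc'
    rw [colorClass_eq_of_eq_or_eq_swap hf hg h hc'.2.1 hc'.2.2]
  rw [xMonomial, xMonomial, Finset.prod_eq_mul_mul_prod_sdiff_pair hc,
    Finset.prod_eq_mul_mul_prod_sdiff_pair hc, Finset.prod_congr rfl hrest, ← sub_mul]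
  exact Ideal.mul_mem_right _ _ <| Ideal.subset_span ⟨_, _, _, _, colorClass_disjoint hf hc,
    colorClass_disjoint hg hc, (colorClass_union_eq_of_eq_or_eq_swap hf hg h).symm, rfl⟩

lemma sub_mem_idealJ_of_kempeEquiv {f g : V → Fin k} (h : KempeEquiv G f g)
    (hf : IsColoring G k f) (hg : IsColoring G k g) :
    xMonomial K G f hf - xMonomial K G g hg ∈ idealJ K G := by
  induction h with
  | refl => simp
  | tail _ hstep ih =>
    obtain ⟨hb, -, hswitch⟩ := hstep
    obtain ⟨c₁, c₂, hswap⟩ := hswitch.exists_eq_or_eq_swap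
    simpa using add_mem (ih hb) (sub_mem_idealJ_of_eq_or_eq_swap K hb hg hswap)

lemma coeffSum_kempeClassExps_eq_zero {p : MvPolynomial (StableSet G) K}
    (hp : p ∈ kempeIdeal K G) (f : V → Fin k) : coeffSum (kempeClassExps G f) p = 0 := by
  rw [kempeIdeal, idealJ, idealM, Submodule.add_eq_sup, ← Ideal.span_union] at hp
  refine coeffSum_eq_zero_of_mem_span ?_ hp
  rintro _ (⟨S₁, S₂, S₃, S₄, h₁₂, h₃₄, hu, rfl⟩ | ⟨S, T, hST, rfl⟩) m
  · have hmem : m + Finsupp.single S₁ 1 + Finsupp.single S₂ 1 ∈ kempeClassExps G f ↔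
        m + Finsupp.single S₃ 1 + Finsupp.single S₄ 1 ∈ kempeClassExps G f :=
      ⟨add_single_mem_kempeClassExps_of_union_eq h₃₄ hu,
        add_single_mem_kempeClassExps_of_union_eq h₁₂ hu.symm⟩
    rw [mul_sub, monomial_mul_X_mul_X, monomial_mul_X_mul_X, map_sub, coeffSum_monomial,
      coeffSum_monomial, sub_eq_zero]
    by_cases h : m + Finsupp.single S₁ 1 + Finsupp.single S₂ 1 ∈ kempeClassExps G f
    · rw [Set.indicator_of_mem h, Set.indicator_of_mem (hmem.1 h), Pi.one_apply, Pi.one_apply]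
    · rw [Set.indicator_of_notMem h, Set.indicator_of_notMem (mt hmem.2 h)]
  · rw [monomial_mul_X_mul_X, coeffSum_monomial, Set.indicator_of_notMem, mul_zero]
    rintro ⟨g, hg, -, he⟩
    obtain ⟨c₁, c₂, hc, rfl, rfl⟩ := exists_ne_of_colorExp_eq_add he
    exact Finset.not_disjoint_iff_nonempty_inter.2 hST (colorClass_disjoint hg hc)

end KempeIdeal

theorem kempe_equiv_iff_mem_kempeIdeal {d k : ℕ} (G : SimpleGraph (Fin d))
    (K : Type) [Field K] (f g : Fin d → Fin k)
    (hf : IsColoring G k f) (hg : IsColoring G k g) :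
    KempeEquiv G f g ↔ xMonomial K G f hf - xMonomial K G g hg ∈ kempeIdeal K G := by
  refine ⟨fun h => Submodule.mem_sup_left (sub_mem_idealJ_of_kempeEquiv K h hf hg), fun h => ?_⟩
  have hf' : colorExp f hf ∈ kempeClassExps G f := ⟨f, hf, Relation.ReflTransGen.refl, rfl⟩
  have hzero := coeffSum_kempeClassExps_eq_zero K h f
  rw [map_sub, xMonomial_eq_monomial, xMonomial_eq_monomial, coeffSum_monomial,
    coeffSum_monomial, Set.indicator_of_mem hf'] at hzero
  have hg' : colorExp g hg ∈ kempeClassExps G f := by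
    by_contra hn
    simp [Set.indicator_of_notMem hn] at hzero
  obtain ⟨g', hg', hfg', he⟩ := hg'
  exact Relation.ReflTransGen.trans hfg' (kempeEquiv_of_colorExp_eq he)
end
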